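/- The SMT encoding of the existential quantifier is correct: with κ clients named 0,…,κ−1, the encoding [(∃x)α]ⁱ = ⋁_{0≤𝔧≤κ−1}[α[𝔧/x]]ⁱ is true in an assignment derived from M iff M,i ⊨ᵏ (∃x)α, provided the per-client encodings [α[𝔧/x]]ⁱ are correct (true iff 𝔧∈Vᵢ and M,[x↦𝔧],i ⊨ᵏₓ α, where the dead predicate dead(𝔧,i) is true iff 𝔧∉Vᵢ). -/

import Mathlib

theorem smt_encoding_exists_correct_general
    (κ i : ℕ) (V : ℕ → Set ℕ)
    (Bx : ℕ → ℕ → Prop)     -- Bx a j : M,[x↦a],j ⊨ᵏₓ α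
    (enc : ℕ → ℕ → Prop)    -- enc 𝔧 j : encoding [α[𝔧/x]]ʲ is true
    (hCN : ∀ a ∈ V i, a < κ)
    (henc : ∀ 𝔧, 𝔧 < κ → (enc 𝔧 i ↔ (𝔧 ∈ V i ∧ Bx 𝔧 i))) :
    ((∃ 𝔧, 𝔧 < κ ∧ enc 𝔧 i) ↔ (∃ a, a ∈ V i ∧ Bx a i)) :=
  ⟨fun ⟨j, hj, he⟩ => ⟨j, (henc j hj).mp he⟩,
    fun ⟨a, ha, hb⟩ => ⟨a, hCN a ha, (henc a (hCN a ha)).mpr ⟨ha, hb⟩⟩⟩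

/-- the SMT encoding of the existential quantifier is correct:
with clients named 0,…,κ−1, the disjunction ⋁_{0≤𝔧≤κ−1}[α[𝔧/x]]ⁱ is true iff
M,i ⊨ᵏ (∃x)α, provided each per-client encoding is correct (true iff 𝔧 ∈ Vᵢ and
M,[x↦𝔧],i ⊨ᵏₓ α), where dead(𝔧,m) holds iff 𝔧 ∉ Vₘ. -/
theorem smt_encoding_exists_correct
    (κ i : ℕ) (V : ℕ → Set ℕ)
    (Bx : ℕ → ℕ → Prop)     -- Bx a j : M,[x↦a],j ⊨ᵏₓ α
    (enc : ℕ → ℕ → Prop)    -- enc 𝔧 j : encoding [α[𝔧/x]]ʲ is true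
    (dead : ℕ → ℕ → Prop)
    (hCN : ∀ a ∈ V i, a < κ)
    (hdead : ∀ 𝔧 m, dead 𝔧 m ↔ 𝔧 ∉ V m)
    (henc : ∀ 𝔧, 𝔧 < κ → (enc 𝔧 i ↔ (𝔧 ∈ V i ∧ Bx 𝔧 i))) :
    ((∃ 𝔧, 𝔧 < κ ∧ enc 𝔧 i) ↔ (∃ a, a ∈ V i ∧ Bx a i)) :=
  smt_encoding_exists_correct_general κ i V Bx enc hCN henc
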